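/- Let B : ℝ → ℂ^{d×d} be measurable with ∫_ℝ ‖B(ξ)‖ dξ < ∞. Then there exists a constant C > 0, depending only on B, such that for every compact interval J = [a, b] with b − a ≥ 1 and also for J = ℝ, and every H_J-pair (y, z) with ∫_J ‖y‖² < ∞, one has sup_{x ∈ J} ‖y(x)‖ ≤ C · (∫_J ‖y(ξ)‖² dξ + ∫_J ‖z(ξ)‖² dξ)^{1/2}. (In the paper's notation: ‖y‖_{L^∞(J)} ≤ C ‖y‖_{H_J} with C independent of J.) -/

import Mathlib

/-!
On a unit interval `I ⊆ J` the first-moment method gives a point `x₀ ∈ I` with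
`‖y x₀‖² ≤ ∫_I ‖y‖²`, and Jensen's inequality gives `∫_I ‖z‖ ≤ (∫_I ‖z‖²)^{1/2}`. The integral
equation yields `‖y v‖ ≤ ‖y u‖ + (∫_u^v ‖B‖) · sup ‖y‖ + ∫_I ‖z‖`, so on a piece of `I` on which
`∫ ‖B‖ ≤ 1/2` the quantity `‖y‖ + 2 ∫_I ‖z‖` at most doubles. Splitting `I` into at most
`⌈2 ∫_ℝ ‖B‖⌉ + 1` such pieces (a chained Grönwall argument) bounds `‖y‖` on `I` by a constant
depending only on `∫_ℝ ‖B‖`. Every point of `J` lies in such a unit interval.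
-/

open MeasureTheory intervalIntegral

/-- An `H_J`-pair for the coefficient `B` on an interval `J ⊆ ℝ`: `y : J → ℂ^d` is
continuous, `z` is measurable with `∫_J ‖z‖² < ∞`, and
`y(x) = y(x₀) + ∫_{x₀}^x (B(ξ)y(ξ) − z(ξ)) dξ` for all `x, x₀ ∈ J`. -/
def IsHJPair (d : ℕ)
    (B : ℝ → (EuclideanSpace ℂ (Fin d) →L[ℂ] EuclideanSpace ℂ (Fin d)))
    (J : Set ℝ) (y z : ℝ → EuclideanSpace ℂ (Fin d)) : Prop :=
  ContinuousOn y J ∧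
  AEStronglyMeasurable z (volume.restrict J) ∧
  IntegrableOn (fun ξ => ‖z ξ‖ ^ 2) J ∧
  ∀ x ∈ J, ∀ x₀ ∈ J, y x = y x₀ + ∫ ξ in x₀..x, (B ξ (y ξ) - z ξ)

open Set
open scoped Interval

/-- Sup form of the integral inequality `g v ≤ g u + |∫_u^v β g| + K`, where `F` plays the role of
a primitive of `β ≥ 0`. -/
def GronwallCondition (g F : ℝ → ℝ) (K : ℝ) (D : Set ℝ) : Prop :=
  ∀ u ∈ D, ∀ v ∈ D, ∀ M, (∀ w ∈ uIcc u v, g w ≤ M) → g v ≤ g u + |F v - F u| * M + K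

namespace GronwallCondition

variable {g F : ℝ → ℝ} {K : ℝ} {D : Set ℝ}

theorem le_two_mul_add (h : GronwallCondition g F K D) (hg : ContinuousOn g D)
    (hg0 : ∀ w ∈ D, 0 ≤ g w) (hF : MonotoneOn F D) {s t : ℝ} (hst : Icc s t ⊆ D)
    (hFst : F t - F s ≤ 1 / 2) {u v : ℝ} (hu : u ∈ Icc s t) (hv : v ∈ Icc s t) :
    g v ≤ 2 * g u + 2 * K := by
  obtain ⟨w, hw, hmax⟩ := isCompact_Icc.exists_isMaxOn ⟨u, hu⟩ (hg.mono hst)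
  have hs : s ∈ Icc s t := left_mem_Icc.2 (hu.1.trans hu.2)
  have ht : t ∈ Icc s t := right_mem_Icc.2 (hu.1.trans hu.2)
  have hFuw : |F w - F u| ≤ 1 / 2 := by
    rw [abs_le]
    constructor <;>
      linarith [hF (hst hs) (hst hu) hu.1, hF (hst hu) (hst ht) hu.2,
        hF (hst hs) (hst hw) hw.1, hF (hst hw) (hst ht) hw.2]
  have hgw := h u (hst hu) w (hst hw) (g w) fun x hx => hmax (uIcc_subset_Icc hu hw hx)
  have hvw : g v ≤ g w := hmax hv
  have hFgw : |F w - F u| * g w ≤ 1 / 2 * g w := mul_le_mul_of_nonneg_right hFuw (hg0 w (hst hw))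
  linarith

theorem add_le_two_pow_mul_add_of_le (h : GronwallCondition g F K D) (hg : ContinuousOn g D)
    (hg0 : ∀ w ∈ D, 0 ≤ g w) (hF : MonotoneOn F D) (hFc : ContinuousOn F D) (hK : 0 ≤ K) (n : ℕ)
    {s t : ℝ} (hst : s ≤ t) (hD : Icc s t ⊆ D) (hFst : F t - F s ≤ (n + 1) / 2) :
    g t + 2 * K ≤ 2 ^ (n + 1) * (g s + 2 * K) ∧ g s + 2 * K ≤ 2 ^ (n + 1) * (g t + 2 * K) := by
  have base {s t : ℝ} (hst : s ≤ t) (hD : Icc s t ⊆ D) (hFst : F t - F s ≤ 1 / 2) :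
      g t + 2 * K ≤ 2 * (g s + 2 * K) ∧ g s + 2 * K ≤ 2 * (g t + 2 * K) := by
    have hs : s ∈ Icc s t := left_mem_Icc.2 hst
    have ht : t ∈ Icc s t := right_mem_Icc.2 hst
    constructor <;> linarith [h.le_two_mul_add hg hg0 hF hD hFst hs ht,
      h.le_two_mul_add hg hg0 hF hD hFst ht hs]
  induction n generalizing s with
  | zero => simpa using base hst hD (by simpa using hFst)
  | succ n ih =>
    have hgs : 0 ≤ g s + 2 * K := by linarith [hg0 s (hD (left_mem_Icc.2 hst))]
    have hgt : 0 ≤ g t + 2 * K := by linarith [hg0 t (hD (right_mem_Icc.2 hst))]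
    by_cases hhalf : F t - F s ≤ 1 / 2
    · have htwo : (2 : ℝ) ≤ 2 ^ (n + 1 + 1) := le_self_pow₀ one_le_two (by omega)
      obtain ⟨hts, hst'⟩ := base hst hD hhalf
      exact ⟨hts.trans (mul_le_mul_of_nonneg_right htwo hgs),
        hst'.trans (mul_le_mul_of_nonneg_right htwo hgt)⟩
    · obtain ⟨m, hm, hFm⟩ : F s + 1 / 2 ∈ F '' Icc s t :=
        intermediate_value_Icc hst (hFc.mono hD) ⟨by linarith, by linarith⟩
      obtain ⟨hms, hsm⟩ := base hm.1 ((Icc_subset_Icc_right hm.2).trans hD) (by linarith)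
      obtain ⟨htm, hmt⟩ := ih hm.2 ((Icc_subset_Icc_left hm.1).trans hD)
        (by push_cast at hFst ⊢; linarith)
      have hpow : (0 : ℝ) ≤ 2 ^ (n + 1) := by positivity
      constructor
      · calc g t + 2 * K ≤ 2 ^ (n + 1) * (g m + 2 * K) := htm
          _ ≤ 2 ^ (n + 1) * (2 * (g s + 2 * K)) := mul_le_mul_of_nonneg_left hms hpow
          _ = 2 ^ (n + 1 + 1) * (g s + 2 * K) := by ring
      · calc g s + 2 * K ≤ 2 * (g m + 2 * K) := hsm
          _ ≤ 2 * (2 ^ (n + 1) * (g t + 2 * K)) := mul_le_mul_of_nonneg_left hmt zero_le_two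
          _ = 2 ^ (n + 1 + 1) * (g t + 2 * K) := by ring

theorem add_le_two_pow_mul_add (h : GronwallCondition g F K D) (hg : ContinuousOn g D)
    (hg0 : ∀ w ∈ D, 0 ≤ g w) (hF : MonotoneOn F D) (hFc : ContinuousOn F D) (hK : 0 ≤ K)
    (hD : D.OrdConnected) (n : ℕ) {u v : ℝ} (hu : u ∈ D) (hv : v ∈ D)
    (huv : |F v - F u| ≤ (n + 1) / 2) :
    g v + 2 * K ≤ 2 ^ (n + 1) * (g u + 2 * K) := by
  rcases le_total u v with h' | h'
  · exact (h.add_le_two_pow_mul_add_of_le hg hg0 hF hFc hK n h' (hD.out hu hv)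
      ((le_abs_self _).trans huv)).1
  · rw [abs_sub_comm] at huv
    exact (h.add_le_two_pow_mul_add_of_le hg hg0 hF hFc hK n h' (hD.out hv hu)
      ((le_abs_self _).trans huv)).2

end GronwallCondition

theorem integrableOn_of_integrableOn_norm_sq {α E : Type*} [MeasurableSpace α] {μ : Measure α}
    [NormedAddCommGroup E] {f : α → E} {S : Set α} (hf : AEStronglyMeasurable f (μ.restrict S))
    (hf2 : IntegrableOn (fun x => ‖f x‖ ^ 2) S μ) (hS : μ S ≠ ⊤) : IntegrableOn f S μ :=
  haveI := isFiniteMeasure_restrict.2 hS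
  ((memLp_two_iff_integrable_sq_norm hf).2 hf2).integrable one_le_two

theorem sq_integral_le_integral_sq {α : Type*} [MeasurableSpace α] {μ : Measure α}
    [IsProbabilityMeasure μ] {f : α → ℝ} (hf : Integrable f μ)
    (hf2 : Integrable (fun x => f x ^ 2) μ) : (∫ x, f x ∂μ) ^ 2 ≤ ∫ x, f x ^ 2 ∂μ :=
  (even_two.convexOn_pow).map_integral_le (continuous_pow 2).continuousOn isClosed_univ
    (ae_of_all _ fun _ => mem_univ _) hf hf2

instance (c : ℝ) : IsProbabilityMeasure (volume.restrict (Icc c (c + 1))) :=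
  ⟨by simp [Real.volume_Icc]⟩

theorem exists_le_setIntegral_Icc_add_one {f : ℝ → ℝ} {c : ℝ}
    (hf : IntegrableOn f (Icc c (c + 1))) :
    ∃ x ∈ Icc c (c + 1), f x ≤ ∫ t in Icc c (c + 1), f t := by
  have hvol : volume (Icc c (c + 1)) = 1 := by simp [Real.volume_Icc]
  simpa [average_eq_integral] using exists_le_setAverage (by simp [hvol]) (by simp [hvol]) hf

noncomputable def embeddingConst {E : Type*} [NormedAddCommGroup E] (B : ℝ → E) : ℝ :=
  3 * 2 ^ (⌈2 * ∫ t, ‖B t‖⌉₊ + 1)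

section HJPair

variable {d : ℕ} {B : ℝ → (EuclideanSpace ℂ (Fin d) →L[ℂ] EuclideanSpace ℂ (Fin d))}
  {J : Set ℝ} {y z : ℝ → EuclideanSpace ℂ (Fin d)}

theorem IsHJPair.norm_le_add (hp : IsHJPair d B J y z) {u v M : ℝ} (hu : u ∈ J) (hv : v ∈ J)
    (hB : IntegrableOn (fun t => ‖B t‖) (Ι u v)) (hz : IntegrableOn (fun t => ‖z t‖) (Ι u v))
    (hM : ∀ w ∈ Ι u v, ‖y w‖ ≤ M) :
    ‖y v‖ ≤ ‖y u‖ + |∫ t in u..v, ‖B t‖| * M + ∫ t in Ι u v, ‖z t‖ := by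
  have hpt : ∀ t ∈ Ι u v, ‖B t (y t) - z t‖ ≤ ‖B t‖ * M + ‖z t‖ := fun t ht =>
    calc ‖B t (y t) - z t‖ ≤ ‖B t (y t)‖ + ‖z t‖ := norm_sub_le _ _
      _ ≤ ‖B t‖ * ‖y t‖ + ‖z t‖ := by gcongr; exact (B t).le_opNorm _
      _ ≤ ‖B t‖ * M + ‖z t‖ := by gcongr; exact hM t ht
  have hBu : ∫ t in Ι u v, ‖B t‖ = |∫ t in u..v, ‖B t‖| := by
    rw [abs_integral_eq_abs_integral_uIoc,
      abs_of_nonneg (setIntegral_nonneg measurableSet_uIoc fun _ _ => norm_nonneg _)]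
  calc ‖y v‖ = ‖y u + ∫ t in u..v, (B t (y t) - z t)‖ := by rw [← hp.2.2.2 v hv u hu]
    _ ≤ ‖y u‖ + ∫ t in Ι u v, ‖B t (y t) - z t‖ :=
      (norm_add_le _ _).trans (add_le_add le_rfl norm_integral_le_integral_norm_uIoc)
    _ ≤ ‖y u‖ + ∫ t in Ι u v, (‖B t‖ * M + ‖z t‖) :=
      add_le_add le_rfl <| integral_mono_of_nonneg (ae_of_all _ fun _ => norm_nonneg _)
        ((hB.mul_const M).add hz) ((ae_restrict_iff' measurableSet_uIoc).2 (ae_of_all _ hpt))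
    _ = ‖y u‖ + |∫ t in u..v, ‖B t‖| * M + ∫ t in Ι u v, ‖z t‖ := by
      rw [integral_add (hB.mul_const M) hz, MeasureTheory.integral_mul_const, hBu, add_assoc]

theorem IsHJPair.gronwallCondition (hp : IsHJPair d B J y z) (hB : Integrable fun t => ‖B t‖)
    {D : Set ℝ} (hDJ : D ⊆ J) (hD : D.OrdConnected) (hz : IntegrableOn (fun t => ‖z t‖) D) :
    GronwallCondition (fun t => ‖y t‖) (fun t => ∫ s in 0..t, ‖B s‖) (∫ t in D, ‖z t‖) D := by
  intro u hu v hv M hM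
  have hsub : Ι u v ⊆ D := uIoc_subset_uIcc.trans (hD.uIcc_subset hu hv)
  rw [integral_interval_sub_left hB.intervalIntegrable hB.intervalIntegrable]
  calc ‖y v‖ ≤ ‖y u‖ + |∫ s in u..v, ‖B s‖| * M + ∫ t in Ι u v, ‖z t‖ :=
        hp.norm_le_add (hDJ hu) (hDJ hv) hB.integrableOn (hz.mono_set hsub)
          fun w hw => hM w (uIoc_subset_uIcc hw)
    _ ≤ ‖y u‖ + |∫ s in u..v, ‖B s‖| * M + ∫ t in D, ‖z t‖ := add_le_add le_rfl <|
        setIntegral_mono_set hz (ae_of_all _ fun _ => norm_nonneg _) hsub.eventuallyLE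

theorem IsHJPair.norm_le_of_Icc_subset (hp : IsHJPair d B J y z) (hB : Integrable B)
    (hy2 : IntegrableOn (fun ξ => ‖y ξ‖ ^ 2) J) {c x : ℝ} (hcJ : Icc c (c + 1) ⊆ J)
    (hx : x ∈ Icc c (c + 1)) :
    ‖y x‖ ≤ embeddingConst B * √((∫ ξ in J, ‖y ξ‖ ^ 2) + ∫ ξ in J, ‖z ξ‖ ^ 2) := by
  set Y := ∫ ξ in J, ‖y ξ‖ ^ 2
  set Z := ∫ ξ in J, ‖z ξ‖ ^ 2
  have hY0 : 0 ≤ Y := setIntegral_nonneg_of_ae (ae_of_all _ fun _ => by positivity)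
  have hZ0 : 0 ≤ Z := setIntegral_nonneg_of_ae (ae_of_all _ fun _ => by positivity)
  have hzI : IntegrableOn (fun t => ‖z t‖) (Icc c (c + 1)) :=
    (integrableOn_of_integrableOn_norm_sq (hp.2.1.mono_measure (Measure.restrict_mono hcJ le_rfl))
      (hp.2.2.1.mono_set hcJ) (by simp [Real.volume_Icc])).norm
  set K := ∫ t in Icc c (c + 1), ‖z t‖
  have hK0 : 0 ≤ K := setIntegral_nonneg measurableSet_Icc fun _ _ => norm_nonneg _
  have hKZ : K ≤ √Z := (Real.le_sqrt hK0 hZ0).2 <|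
    (sq_integral_le_integral_sq hzI (hp.2.2.1.mono_set hcJ)).trans <|
      setIntegral_mono_set hp.2.2.1 (ae_of_all _ fun _ => by positivity) hcJ.eventuallyLE
  obtain ⟨x₀, hx₀, hy₀⟩ := exists_le_setIntegral_Icc_add_one (hy2.mono_set hcJ)
  have hx₀Y : ‖y x₀‖ ≤ √Y := (Real.le_sqrt (norm_nonneg _) hY0).2 <|
    hy₀.trans <| setIntegral_mono_set hy2 (ae_of_all _ fun _ => by positivity) hcJ.eventuallyLE
  have hβ : Integrable fun t => ‖B t‖ := hB.norm
  set F : ℝ → ℝ := fun t => ∫ s in 0..t, ‖B s‖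
  have hF : ∀ u v, F v - F u = ∫ s in u..v, ‖B s‖ := fun u v =>
    integral_interval_sub_left hβ.intervalIntegrable hβ.intervalIntegrable
  have hmono : MonotoneOn F (Icc c (c + 1)) := fun u _ v _ huv =>
    sub_nonneg.1 <| (hF u v).symm ▸ integral_nonneg huv fun _ _ => norm_nonneg _
  set N := ⌈2 * ∫ t, ‖B t‖⌉₊
  have hvar : |F x - F x₀| ≤ (N + 1) / 2 := by
    have hβx : |∫ s in x₀..x, ‖B s‖| ≤ ∫ s, ‖B s‖ := by
      simpa using (norm_integral_le_integral_norm_uIoc (f := fun s => ‖B s‖)).trans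
        (setIntegral_le_integral hβ.norm (ae_of_all _ fun _ => norm_nonneg _))
    rw [hF]
    linarith [Nat.le_ceil (2 * ∫ t, ‖B t‖)]
  have hgr := (hp.gronwallCondition hβ hcJ ordConnected_Icc hzI).add_le_two_pow_mul_add
    (hp.1.mono hcJ).norm (fun _ _ => norm_nonneg _) hmono (hβ.continuous_primitive 0).continuousOn
    hK0 ordConnected_Icc N hx₀ hx hvar
  have hYT : √Y ≤ √(Y + Z) := Real.sqrt_le_sqrt (le_add_of_nonneg_right hZ0)
  have hZT : √Z ≤ √(Y + Z) := Real.sqrt_le_sqrt (le_add_of_nonneg_left hY0)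
  calc ‖y x‖ ≤ 2 ^ (N + 1) * (‖y x₀‖ + 2 * K) := by linarith
    _ ≤ 2 ^ (N + 1) * (3 * √(Y + Z)) := by gcongr; linarith
    _ = embeddingConst B * √(Y + Z) := by rw [embeddingConst]; ring

end HJPair

theorem exists_Icc_add_one_subset_Icc {a b x : ℝ} (hab : a + 1 ≤ b) (hx : x ∈ Icc a b) :
    ∃ c, Icc c (c + 1) ⊆ Icc a b ∧ x ∈ Icc c (c + 1) := by
  obtain ⟨hax, hxb⟩ := hx
  exact ⟨max a (x - 1), Icc_subset_Icc (le_max_left _ _) (by grind), by grind, by grind⟩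

/-- uniform embedding `H_J ↪ L^∞(J)`: there is `C > 0`, depending only on
the integrable coefficient `B`, such that for every compact interval `J = [a,b]` with
`b − a ≥ 1` and also for `J = ℝ`, every `H_J`-pair `(y,z)` with `∫_J ‖y‖² < ∞` satisfies
`sup_{x∈J} ‖y(x)‖ ≤ C (∫_J ‖y‖² + ∫_J ‖z‖²)^{1/2}`. -/
theorem stmt18 (d : ℕ)
    (B : ℝ → (EuclideanSpace ℂ (Fin d) →L[ℂ] EuclideanSpace ℂ (Fin d)))
    (hB : Integrable B) :
    ∃ C > 0,
      (∀ a b : ℝ, a + 1 ≤ b →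
        ∀ y z : ℝ → EuclideanSpace ℂ (Fin d),
          IsHJPair d B (Set.Icc a b) y z →
          IntegrableOn (fun ξ => ‖y ξ‖ ^ 2) (Set.Icc a b) →
          ∀ x ∈ Set.Icc a b,
            ‖y x‖ ≤ C * Real.sqrt
              ((∫ ξ in Set.Icc a b, ‖y ξ‖ ^ 2) + ∫ ξ in Set.Icc a b, ‖z ξ‖ ^ 2)) ∧
      (∀ y z : ℝ → EuclideanSpace ℂ (Fin d),
        IsHJPair d B Set.univ y z →
        Integrable (fun ξ => ‖y ξ‖ ^ 2) →
        ∀ x : ℝ,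
          ‖y x‖ ≤ C * Real.sqrt ((∫ ξ, ‖y ξ‖ ^ 2) + ∫ ξ, ‖z ξ‖ ^ 2)) := by
  refine ⟨embeddingConst B, by rw [embeddingConst]; positivity, ?_, ?_⟩
  · intro a b hab y z hp hy2 x hx
    obtain ⟨c, hcJ, hxc⟩ := exists_Icc_add_one_subset_Icc hab hx
    exact hp.norm_le_of_Icc_subset hB hy2 hcJ hxc
  · intro y z hp hy2 x
    simpa using hp.norm_le_of_Icc_subset hB hy2.integrableOn (subset_univ _)
      (show x ∈ Icc (x - 1) (x - 1 + 1) by constructor <;> linarith)
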